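/- With the colinear-means Gaussian mixture model (y = μ + w, μ taking value μ_i with probability p_i ≥ p_min > 0, all μ_i on the line spanned by unit vector u, w ∼ N(0,Σ) independent), for every integer t ≥ 1 and every v ∈ ℝ^d: E⟨y, v⟩^(2t) ≥ (⟨u, v⟩² · (E⟨μ, u⟩^(2t))^(1/t) + p_min^(1/t) · (t/2) · (vᵀΣv))^t. -/

import Mathlib

/-!
Since every mean is a multiple of `u`, `⟨y, v⟩ = ⟨u, v⟩ ⟨μ, u⟩ + ⟨w, v⟩` with independent summands,
the second one distributed as `N(0, vᵀΣv)`. Expanding the `2t`-th power, the odd Gaussian moments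
vanish and the even ones are `(vᵀΣv)^r (2r-1)‼`, so `E⟨y, v⟩^(2t)` is the sum over `s ≤ t` of
`C(2t,2s) ⟨u,v⟩^(2s) E⟨μ,u⟩^(2s) (vᵀΣv)^(t-s) (2t-2s-1)‼`. The binomial expansion of the left-hand
side is dominated term by term: `E⟨μ,u⟩^(2s) ≥ p_min^(1-s/t) (E⟨μ,u⟩^(2t))^(s/t)` because every atom
of the mixture has mass at least `p_min`, and `C(2t,2s) (2t-2s-1)‼ ≥ C(t,s) (t/2)^(t-s)`.
-/

open MeasureTheory ProbabilityTheory Matrix Finset Real Set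
open scoped NNReal Nat

namespace Nat

/-- Split `(2t)(2t-1)⋯(2t-2r+1)` into its first `r` factors, each at least `t`, and the last `r`,
which dominate `t(t-1)⋯(t-r+1)` factorwise. -/
theorem descFactorial_mul_pow_le_descFactorial_two_mul {t r : ℕ} (hr : r ≤ t) :
    t.descFactorial r * t ^ r ≤ (2 * t).descFactorial (2 * r) := by
  rw [← descFactorial_mul_descFactorial (show r ≤ 2 * r by omega), show 2 * r - r = r by omega]
  gcongr
  · omega
  · exact (Nat.pow_le_pow_left (by omega) r).trans (pow_sub_le_descFactorial (2 * t) r)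

theorem doubleFactorial_mul_doubleFactorial_sub_one : ∀ n : ℕ, n‼ * (n - 1)‼ = n !
  | 0 => rfl
  | n + 1 => (factorial_eq_mul_doubleFactorial n).symm

theorem choose_mul_pow_le_choose_two_mul {s t : ℕ} (hst : s ≤ t) :
    t.choose s * t ^ (t - s) ≤ (2 * t).choose (2 * s) * (2 * (t - s) - 1)‼ * 2 ^ (t - s) := by
  set r := t - s
  have h2 : 2 * t - 2 * s = 2 * r := by omega
  refine Nat.le_of_mul_le_mul_right ?_ r.factorial_pos
  calc t.choose s * t ^ r * r ! = t.descFactorial r * t ^ r := by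
        rw [descFactorial_eq_factorial_mul_choose, ← choose_symm hst]; ring
    _ ≤ (2 * t).descFactorial (2 * r) := descFactorial_mul_pow_le_descFactorial_two_mul (by omega)
    _ = (2 * t).choose (2 * s) * (2 * r - 1)‼ * 2 ^ r * r ! := by
        rw [descFactorial_eq_factorial_mul_choose, ← h2, choose_symm (by omega), h2,
          ← doubleFactorial_mul_doubleFactorial_sub_one, doubleFactorial_two_mul]
        ring

end Nat

theorem choose_mul_div_two_pow_le {s t : ℕ} (hst : s ≤ t) :
    (t.choose s : ℝ) * ((t : ℝ) / 2) ^ (t - s)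
      ≤ (2 * t).choose (2 * s) * (2 * (t - s) - 1 : ℕ)‼ := by
  rw [div_pow, ← mul_div_assoc, div_le_iff₀ (by positivity)]
  exact_mod_cast Nat.choose_mul_pow_le_choose_two_mul hst

theorem Real.rpow_sum_le_sum_rpow {ι : Type*} {s : Finset ι} (hs : s.Nonempty) {f : ι → ℝ}
    (hf : ∀ i ∈ s, 0 ≤ f i) {e : ℝ} (he0 : 0 ≤ e) (he1 : e ≤ 1) :
    (∑ i ∈ s, f i) ^ e ≤ ∑ i ∈ s, f i ^ e := by
  induction hs using Finset.Nonempty.cons_induction with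
  | singleton a => simp
  | cons a s _ _ ih =>
    simp only [forall_mem_cons, sum_cons] at hf ⊢
    calc (f a + ∑ i ∈ s, f i) ^ e ≤ f a ^ e + (∑ i ∈ s, f i) ^ e :=
          rpow_add_le_add_rpow hf.1 (sum_nonneg hf.2) he0 he1
      _ ≤ f a ^ e + ∑ i ∈ s, f i ^ e := by gcongr; exact ih hf.2

theorem rpow_mul_rpow_sum_le_sum_mul_rpow {ι : Type*} {s : Finset ι} (hs : s.Nonempty)
    {q x : ι → ℝ} {c : ℝ} (hc : 0 < c) (hq : ∀ i ∈ s, c ≤ q i) (hx : ∀ i ∈ s, 0 ≤ x i)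
    {e : ℝ} (he0 : 0 ≤ e) (he1 : e ≤ 1) :
    c ^ (1 - e) * (∑ i ∈ s, q i * x i) ^ e ≤ ∑ i ∈ s, q i * x i ^ e := by
  have hq0 : ∀ i ∈ s, 0 < q i := fun i hi => hc.trans_le (hq i hi)
  have hterm : ∀ i ∈ s, (q i * x i) ^ e ≤ c ^ (e - 1) * (q i * x i ^ e) := fun i hi => by
    rw [mul_rpow (hq0 i hi).le (hx i hi), ← mul_assoc]
    refine mul_le_mul_of_nonneg_right ?_ (rpow_nonneg (hx i hi) e)
    calc q i ^ e = q i ^ (e - 1) * q i := by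
          rw [rpow_sub (hq0 i hi), rpow_one, div_mul_cancel₀ _ (hq0 i hi).ne']
      _ ≤ c ^ (e - 1) * q i :=
          mul_le_mul_of_nonneg_right (rpow_le_rpow_of_nonpos hc (hq i hi) (by linarith))
            (hq0 i hi).le
  calc c ^ (1 - e) * (∑ i ∈ s, q i * x i) ^ e
      ≤ c ^ (1 - e) * ∑ i ∈ s, c ^ (e - 1) * (q i * x i ^ e) := by
        gcongr
        exact (rpow_sum_le_sum_rpow hs (fun i hi => mul_nonneg (hq0 i hi).le (hx i hi))
          he0 he1).trans (sum_le_sum hterm)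
    _ = ∑ i ∈ s, q i * x i ^ e := by
        rw [← mul_sum, ← mul_assoc, ← rpow_add hc, sub_add_sub_cancel', sub_self, rpow_zero,
          one_mul]

theorem rpow_mul_rpow_sum_pow_le_sum_mul_pow {ι : Type*} {s : Finset ι} (hs : s.Nonempty)
    {q a : ι → ℝ} {c : ℝ} (hc : 0 < c) (hq : ∀ i ∈ s, c ≤ q i) {n t : ℕ} (hnt : n ≤ t)
    (ht : 0 < t) :
    c ^ (1 - (n : ℝ) / t) * (∑ i ∈ s, q i * a i ^ (2 * t)) ^ ((n : ℝ) / t)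
      ≤ ∑ i ∈ s, q i * a i ^ (2 * n) := by
  convert rpow_mul_rpow_sum_le_sum_mul_rpow hs hc hq (x := fun i => a i ^ (2 * t))
    (e := (n : ℝ) / t) (fun i _ => (even_two_mul t).pow_nonneg _) (by positivity)
    (div_le_one_of_le₀ (by exact_mod_cast hnt) (by positivity)) using 3 with i
  rw [pow_mul, pow_mul, ← rpow_natCast (a i ^ 2) t, ← rpow_mul (sq_nonneg _),
    mul_div_cancel₀ _ (by positivity), rpow_natCast]

/-- The double factorial enters through `Γ(k + 1/2) = (2k-1)‼ √π / 2^k`. -/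
theorem integral_pow_two_mul_mul_exp_neg_mul_sq {b : ℝ} (hb : 0 < b) (k : ℕ) :
    ∫ x : ℝ, x ^ (2 * k) * exp (-b * x ^ 2)
      = b ^ (-(2 * k + 1 : ℝ) / 2) * (2 * k - 1 : ℕ)‼ * √π / 2 ^ k := by
  have hIoi : ∫ x in Ioi (0 : ℝ), x ^ (2 * k) * exp (-b * x ^ 2)
      = ∫ x in Ioi (0 : ℝ), x ^ (2 * k : ℝ) * exp (-b * x ^ (2 : ℝ)) := by
    refine setIntegral_congr_fun measurableSet_Ioi fun x _ => ?_
    norm_cast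
  have hsymm := integral_comp_abs (f := fun x : ℝ => x ^ (2 * k) * exp (-b * x ^ 2))
  simp only [(even_two_mul k).pow_abs, sq_abs] at hsymm
  rw [hsymm, hIoi,
    integral_rpow_mul_exp_neg_mul_rpow two_pos (by linarith [k.cast_nonneg (α := ℝ)]) hb,
    show (2 * k + 1 : ℝ) / 2 = k + 1 / 2 by ring, Gamma_nat_add_half]
  ring

theorem integral_pow_two_mul_gaussianReal (V : ℝ≥0) (k : ℕ) :
    ∫ x, x ^ (2 * k) ∂gaussianReal 0 V = (V : ℝ) ^ k * (2 * k - 1 : ℕ)‼ := by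
  rcases eq_or_ne V 0 with rfl | hV
  · cases k <;> simp [gaussianReal_zero_var]
  have hb : 0 < (2 * (V : ℝ))⁻¹ := by positivity
  have hpdf : ∀ x, gaussianPDFReal 0 V x • x ^ (2 * k)
      = (√(2 * π * V))⁻¹ * (x ^ (2 * k) * exp (-(2 * (V : ℝ))⁻¹ * x ^ 2)) := fun x => by
    rw [gaussianPDFReal, smul_eq_mul,
      show -(x - 0) ^ 2 / (2 * V) = -(2 * (V : ℝ))⁻¹ * x ^ 2 by ring]
    ring
  simp_rw [integral_gaussianReal_eq_integral_smul hV, hpdf]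
  rw [integral_const_mul, integral_pow_two_mul_mul_exp_neg_mul_sq hb, inv_rpow (by positivity),
    ← rpow_neg (by positivity), neg_div, neg_neg, add_div, rpow_add (by positivity),
    show (2 * k : ℝ) / 2 = k by ring, rpow_natCast, ← sqrt_eq_rpow,
    show 2 * π * V = 2 * V * π by ring, sqrt_mul (by positivity), mul_pow]
  field_simp

theorem integral_pow_gaussianReal_of_odd (V : ℝ≥0) {n : ℕ} (hn : Odd n) :
    ∫ x, x ^ n ∂gaussianReal 0 V = 0 := by
  have h := integral_map (μ := gaussianReal 0 V) measurable_neg.aemeasurable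
    (f := fun x : ℝ => x ^ n) (by fun_prop)
  rw [gaussianReal_map_neg, neg_zero] at h
  simp only [hn.neg_pow, integral_neg] at h
  linarith

theorem integrable_pow_gaussianReal (μ : ℝ) (V : ℝ≥0) (n : ℕ) :
    Integrable (fun x => x ^ n) (gaussianReal μ V) :=
  ((memLp_id_gaussianReal n).integrable_norm_pow').mono' (by fun_prop)
    (ae_of_all _ fun x => by simp [norm_pow])

theorem Finset.sum_range_two_mul_add_one_eq_sum_even {M : Type*} [AddCommMonoid M] {f : ℕ → M}
    (hf : ∀ i, Odd i → f i = 0) (t : ℕ) :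
    ∑ i ∈ range (2 * t + 1), f i = ∑ s ∈ range (t + 1), f (2 * s) := by
  induction t with
  | zero => simp
  | succ t ih =>
    rw [show 2 * (t + 1) + 1 = 2 * t + 1 + 1 + 1 by ring, sum_range_succ, sum_range_succ, ih,
      hf _ (odd_two_mul_add_one t), add_zero, sum_range_succ (n := t + 1), mul_add_one]

theorem integral_add_pow_two_mul_of_hasLaw_gaussianReal {Ω : Type*} [MeasurableSpace Ω]
    {P : Measure Ω} {X W : Ω → ℝ} {V : ℝ≥0} (hX : ∀ n, Integrable (fun ω => X ω ^ n) P)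
    (hW : HasLaw W (gaussianReal 0 V) P) (hXW : IndepFun X W P) (t : ℕ) :
    ∫ ω, (X ω + W ω) ^ (2 * t) ∂P
      = ∑ s ∈ range (t + 1), ((2 * t).choose (2 * s) : ℝ) * (∫ ω, X ω ^ (2 * s) ∂P)
          * ((V : ℝ) ^ (t - s) * (2 * (t - s) - 1 : ℕ)‼) := by
  have hWint : ∀ n, Integrable (fun ω => W ω ^ n) P := fun n =>
    (integrable_map_measure (g := fun x : ℝ => x ^ n) (by fun_prop) hW.aemeasurable).mp
      (hW.map_eq ▸ integrable_pow_gaussianReal 0 V n)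
  have hWmom : ∀ n, ∫ ω, W ω ^ n ∂P = ∫ x, x ^ n ∂gaussianReal 0 V := fun n =>
    hW.integral_comp (f := fun x => x ^ n) (by fun_prop)
  have hind : ∀ i j, IndepFun (fun ω => X ω ^ i) (fun ω => W ω ^ j) P := fun i j =>
    hXW.comp (measurable_id.pow_const i) (measurable_id.pow_const j)
  have hint : ∀ i, Integrable (fun ω => X ω ^ i * W ω ^ (2 * t - i) * (2 * t).choose i) P :=
    fun i => ((hind i _).integrable_mul (hX i) (hWint _)).mul_const _
  have hterm : ∀ i, ∫ ω, X ω ^ i * W ω ^ (2 * t - i) * (2 * t).choose i ∂P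
      = (2 * t).choose i * (∫ ω, X ω ^ i ∂P) * ∫ x, x ^ (2 * t - i) ∂gaussianReal 0 V := by
    intro i
    rw [integral_mul_const, (hind i _).integral_fun_mul_eq_mul_integral
      (hX i).aestronglyMeasurable (hWint _).aestronglyMeasurable, hWmom]
    ring
  simp_rw [add_pow]
  rw [integral_finsetSum _ fun i _ => hint i]
  simp_rw [hterm]
  rw [sum_range_two_mul_add_one_eq_sum_even]
  · refine sum_congr rfl fun s _ => ?_
    rw [show 2 * t - 2 * s = 2 * (t - s) by omega, integral_pow_two_mul_gaussianReal]
  · intro i hi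
    rcases le_or_gt i (2 * t) with hit | hit
    · rw [integral_pow_gaussianReal_of_odd V (by
        obtain ⟨j, rfl⟩ := hi; exact ⟨t - j - 1, by omega⟩), mul_zero]
    · rw [Nat.choose_eq_zero_of_lt hit, Nat.cast_zero, zero_mul, zero_mul]

theorem integral_comp_eq_sum_mul {Ω ι : Type*} [MeasurableSpace Ω] [Fintype ι]
    [MeasurableSpace ι] [MeasurableSingletonClass ι] {P : Measure Ω} [IsFiniteMeasure P]
    {idx : Ω → ι} (hidx : Measurable idx) {p : ι → ℝ} (hp : ∀ j, 0 ≤ p j)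
    (hlaw : ∀ j, P (idx ⁻¹' {j}) = ENNReal.ofReal (p j)) (g : ι → ℝ) :
    ∫ ω, g (idx ω) ∂P = ∑ j, p j * g j := by
  rw [← integral_map hidx.aemeasurable Measurable.of_discrete.aestronglyMeasurable,
    integral_fintype .of_finite]
  refine sum_congr rfl fun j _ => ?_
  rw [measureReal_def, Measure.map_apply hidx (measurableSet_singleton j), hlaw j,
    ENNReal.toReal_ofReal (hp j), smul_eq_mul]

theorem pow_mul_pow_mul_choose_le {s t : ℕ} (hst : s ≤ t) (ht : 0 < t) {c M M' pmin V : ℝ}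
    (hM : 0 ≤ M) (hpmin : 0 < pmin) (hV : 0 ≤ V)
    (hmean : pmin ^ (1 - (s : ℝ) / t) * M ^ ((s : ℝ) / t) ≤ M') :
    (c ^ 2 * M ^ ((1 : ℝ) / t)) ^ s * (pmin ^ ((1 : ℝ) / t) * ((t : ℝ) / 2) * V) ^ (t - s)
        * t.choose s
      ≤ (2 * t).choose (2 * s) * (c ^ (2 * s) * M') * (V ^ (t - s) * (2 * (t - s) - 1 : ℕ)‼) := by
  have hM_pow : (M ^ ((1 : ℝ) / t)) ^ s = M ^ ((s : ℝ) / t) := by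
    rw [← rpow_natCast, ← rpow_mul hM, one_div_mul_eq_div]
  have hpmin_pow : (pmin ^ ((1 : ℝ) / t)) ^ (t - s) = pmin ^ (1 - (s : ℝ) / t) := by
    rw [← rpow_natCast, ← rpow_mul hpmin.le, Nat.cast_sub hst]
    congr 1
    field_simp
  have hc : 0 ≤ c ^ (2 * s) := (even_two_mul s).pow_nonneg c
  calc (c ^ 2 * M ^ ((1 : ℝ) / t)) ^ s * (pmin ^ ((1 : ℝ) / t) * ((t : ℝ) / 2) * V) ^ (t - s)
        * t.choose s
      = (t.choose s * ((t : ℝ) / 2) ^ (t - s))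
          * (c ^ (2 * s) * (pmin ^ (1 - (s : ℝ) / t) * M ^ ((s : ℝ) / t))) * V ^ (t - s) := by
        rw [mul_pow, mul_pow, mul_pow, hM_pow, hpmin_pow, ← pow_mul]
        ring
    _ ≤ ((2 * t).choose (2 * s) * (2 * (t - s) - 1 : ℕ)‼) * (c ^ (2 * s) * M') * V ^ (t - s) := by
        gcongr ?_ * (_ * ?_) * _
        exact choose_mul_div_two_pow_le hst
    _ = _ := by ring

theorem stmt11_general {Ω : Type*} [MeasurableSpace Ω] (P : Measure Ω) [IsProbabilityMeasure P]
    {d k : ℕ} (S : Matrix (Fin d) (Fin d) ℝ) (hS : S.PosSemidef)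
    (u : Fin d → ℝ)
    (m : Fin k → (Fin d → ℝ)) (hcol : ∀ j, m j = (m j ⬝ᵥ u) • u)
    (p : Fin k → ℝ) (pmin : ℝ) (hpmin : 0 < pmin) (hp : ∀ j, pmin ≤ p j)
    (idx : Ω → Fin k) (hidx : Measurable idx)
    (hlaw : ∀ j, P (idx ⁻¹' {j}) = ENNReal.ofReal (p j))
    (wRV : Ω → (Fin d → ℝ)) (hwmeas : Measurable wRV)
    (hindep : IndepFun (fun ω => m (idx ω)) wRV P)
    (hgauss : ∀ v : Fin d → ℝ,
      Measure.map (fun ω => wRV ω ⬝ᵥ v) P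
        = gaussianReal 0 (Real.toNNReal (v ⬝ᵥ S.mulVec v)))
    (t : ℕ) (ht : 1 ≤ t) (v : Fin d → ℝ) :
    ((u ⬝ᵥ v) ^ 2 * (∫ ω, (m (idx ω) ⬝ᵥ u) ^ (2 * t) ∂P) ^ ((1 : ℝ) / t)
        + pmin ^ ((1 : ℝ) / t) * ((t : ℝ) / 2) * (v ⬝ᵥ S.mulVec v)) ^ t
      ≤ ∫ ω, ((m (idx ω) + wRV ω) ⬝ᵥ v) ^ (2 * t) ∂P := by
  have : Nonempty (Fin k) := ⟨idx (nonempty_of_isProbabilityMeasure P).some⟩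
  have hp0 : ∀ j, 0 ≤ p j := fun j => hpmin.le.trans (hp j)
  have hV : 0 ≤ v ⬝ᵥ S.mulVec v := hS.dotProduct_mulVec_nonneg v
  have hdot : Measurable fun y : Fin d → ℝ => y ⬝ᵥ v := by fun_prop
  have hmoment_u : ∀ n, ∫ ω, (m (idx ω) ⬝ᵥ u) ^ n ∂P = ∑ j, p j * (m j ⬝ᵥ u) ^ n := fun n =>
    integral_comp_eq_sum_mul hidx hp0 hlaw fun j => (m j ⬝ᵥ u) ^ n
  have hmoment_v : ∀ n, ∫ ω, (m (idx ω) ⬝ᵥ v) ^ n ∂P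
      = (u ⬝ᵥ v) ^ n * ∑ j, p j * (m j ⬝ᵥ u) ^ n := by
    have hproj : ∀ j, m j ⬝ᵥ v = (u ⬝ᵥ v) * (m j ⬝ᵥ u) := fun j => by
      conv_lhs => rw [hcol j]
      rw [smul_dotProduct, smul_eq_mul, mul_comm]
    intro n
    simp_rw [hproj, mul_pow]
    rw [integral_const_mul, hmoment_u]
  have hexpand := integral_add_pow_two_mul_of_hasLaw_gaussianReal
    (X := fun ω => m (idx ω) ⬝ᵥ v) (W := fun ω => wRV ω ⬝ᵥ v)
    (fun n => Integrable.of_finite.comp_measurable hidx (g := fun j => (m j ⬝ᵥ v) ^ n))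
    ⟨(hdot.comp hwmeas).aemeasurable, hgauss v⟩ (hindep.comp hdot hdot) t
  rw [Real.coe_toNNReal _ hV] at hexpand
  simp only [add_dotProduct]
  rw [hexpand, add_pow]
  simp only [hmoment_u, hmoment_v]
  refine sum_le_sum fun s hs => ?_
  have hst : s ≤ t := Nat.lt_succ_iff.mp (mem_range.mp hs)
  exact pow_mul_pow_mul_choose_le hst ht
    (sum_nonneg fun j _ => mul_nonneg (hp0 j) ((even_two_mul t).pow_nonneg _)) hpmin hV
    (rpow_mul_rpow_sum_pow_le_sum_mul_pow univ_nonempty hpmin (fun j _ => hp j) hst ht)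

/-- Moment lower bound for the colinear-means Gaussian mixture: `y = μ + w`, `μ = m ∘ idx`
taking value `m j` with probability `p j ≥ p_min > 0`, all `m j` on the line spanned by a
unit vector `u`, `w ∼ N(0, Σ)` independent of `μ`. For every `t ≥ 1` and `v ∈ ℝ^d`:
`E⟨y, v⟩^(2t) ≥ (⟨u,v⟩² (E⟨μ,u⟩^(2t))^(1/t) + p_min^(1/t) (t/2) (vᵀΣv))^t`. -/
theorem stmt11 {Ω : Type*} [MeasurableSpace Ω] (P : Measure Ω) [IsProbabilityMeasure P]
    {d k : ℕ} (S : Matrix (Fin d) (Fin d) ℝ) (hS : S.PosSemidef)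
    (u : Fin d → ℝ) (hu : u ⬝ᵥ u = 1)
    (m : Fin k → (Fin d → ℝ)) (hcol : ∀ j, m j = (m j ⬝ᵥ u) • u)
    (p : Fin k → ℝ) (pmin : ℝ) (hpmin : 0 < pmin) (hp : ∀ j, pmin ≤ p j)
    (idx : Ω → Fin k) (hidx : Measurable idx)
    (hlaw : ∀ j, P (idx ⁻¹' {j}) = ENNReal.ofReal (p j))
    (wRV : Ω → (Fin d → ℝ)) (hwmeas : Measurable wRV)
    (hindep : IndepFun (fun ω => m (idx ω)) wRV P)
    (hgauss : ∀ v : Fin d → ℝ,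
      Measure.map (fun ω => wRV ω ⬝ᵥ v) P
        = gaussianReal 0 (Real.toNNReal (v ⬝ᵥ S.mulVec v)))
    (t : ℕ) (ht : 1 ≤ t) (v : Fin d → ℝ) :
    ((u ⬝ᵥ v) ^ 2 * (∫ ω, (m (idx ω) ⬝ᵥ u) ^ (2 * t) ∂P) ^ ((1 : ℝ) / t)
        + pmin ^ ((1 : ℝ) / t) * ((t : ℝ) / 2) * (v ⬝ᵥ S.mulVec v)) ^ t
      ≤ ∫ ω, ((m (idx ω) + wRV ω) ⬝ᵥ v) ^ (2 * t) ∂P :=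
  stmt11_general P S hS u m hcol p pmin hpmin hp idx hidx hlaw wRV hwmeas hindep hgauss t ht v
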